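/- arXiv:cs/9809109 — 2 statements merged into one kernel-verified Lean document; each statement's English description precedes it below -/
import Mathlib

section
/- If a finite connected graph G has an even number of vertices, then G has a spanning subgraph in which every vertex has odd degree. -/
/-!
Parities of degrees add under symmetric difference of edge sets. Hence the edges that a walk
from `u` to `v` traverses an odd number of times have odd degree exactly at `u` and `v`
(nowhere if `u = v`). In a connected graph, the symmetric difference of such edge sets for walks
from a fixed `v₀` to every `v ∈ S` has odd degree exactly on `S`, once `#S` is even so that the
contributions at `v₀` cancel.
-/

open Finset
open scoped symmDiff

namespace Finset

variable {α : Type*} [DecidableEq α]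

theorem card_symmDiff_add_two_mul_card_inter (s t : Finset α) :
    #(s ∆ t) + 2 * #(s ∩ t) = #s + #t := by
  rw [symmDiff_eq_sup_sdiff_inf, sup_eq_union, inf_eq_inter, ← card_union_add_card_inter,
    card_sdiff_of_subset inter_subset_union]
  have := card_le_card (inter_subset_union (s := s) (t := t))
  omega

theorem natCast_card_symmDiff_zmod_two (s t : Finset α) :
    (#(s ∆ t) : ZMod 2) = #s + #t := by
  have h := congrArg (Nat.cast : ℕ → ZMod 2) (card_symmDiff_add_two_mul_card_inter s t)
  push_cast at h
  simpa [CharTwo.two_eq_zero] using h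

theorem filter_symmDiff (p : α → Prop) [DecidablePred p] (s t : Finset α) :
    (s ∆ t).filter p = s.filter p ∆ t.filter p := by
  ext a
  simp only [mem_filter, mem_symmDiff]
  tauto

end Finset

namespace SimpleGraph

variable {V : Type*} [DecidableEq V] {G : SimpleGraph V}

theorem natCast_card_filter_mem_edge_zmod_two {u v : V} (h : u ≠ v) (x : V) :
    (#(({s(u, v)} : Finset (Sym2 V)).filter (x ∈ ·)) : ZMod 2) =
      (if x = u then 1 else 0) + (if x = v then 1 else 0) := by
  rw [filter_singleton]
  by_cases hu : x = u
  · subst hu; simp [h]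
  · by_cases hv : x = v
    · subst hv; simp [hu]
    · simp [hu, hv]

theorem Walk.exists_edges_degree_parity {u v : V} (p : G.Walk u v) :
    ∃ F : Finset (Sym2 V), ↑F ⊆ G.edgeSet ∧ ∀ x,
      (#(F.filter (x ∈ ·)) : ZMod 2) = (if x = u then 1 else 0) + (if x = v then 1 else 0) := by
  induction p with
  | nil => exact ⟨∅, by simp, fun x => by simp [CharTwo.add_self_eq_zero]⟩
  | @cons u w v huw p ih =>
    obtain ⟨F, hFG, hF⟩ := ih
    refine ⟨{s(u, w)} ∆ F, ?_, fun x => ?_⟩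
    · rw [coe_symmDiff, coe_singleton]
      exact Set.symmDiff_subset_union.trans (Set.union_subset (by simpa using huw) hFG)
    · rw [filter_symmDiff, natCast_card_symmDiff_zmod_two,
        natCast_card_filter_mem_edge_zmod_two huw.ne, hF, add_assoc,
        CharTwo.add_cancel_left]

theorem Connected.exists_edges_degree_parity (hG : G.Connected) (v₀ : V) (S : Finset V) :
    ∃ F : Finset (Sym2 V), ↑F ⊆ G.edgeSet ∧ ∀ x, (#(F.filter (x ∈ ·)) : ZMod 2) =
      ∑ v ∈ S, ((if x = v₀ then 1 else 0) + (if x = v then 1 else 0)) := by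
  induction S using Finset.induction_on with
  | empty => exact ⟨∅, by simp, fun x => by simp⟩
  | @insert v S hv ih =>
    obtain ⟨F, hFG, hF⟩ := ih
    obtain ⟨P, hPG, hP⟩ := (hG v₀ v).some.exists_edges_degree_parity
    refine ⟨P ∆ F, ?_, fun x => ?_⟩
    · rw [coe_symmDiff]
      exact Set.symmDiff_subset_union.trans (Set.union_subset hPG hFG)
    · rw [filter_symmDiff, natCast_card_symmDiff_zmod_two, hF, hP, sum_insert hv]

theorem Connected.exists_edges_odd_degree_iff_mem (hG : G.Connected) {S : Finset V}
    (hS : Even #S) :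
    ∃ F : Finset (Sym2 V), ↑F ⊆ G.edgeSet ∧ ∀ x, Odd #(F.filter (x ∈ ·)) ↔ x ∈ S := by
  obtain ⟨v₀⟩ := hG.nonempty
  obtain ⟨F, hFG, hF⟩ := hG.exists_edges_degree_parity v₀ S
  refine ⟨F, hFG, fun x => ?_⟩
  rw [← ZMod.natCast_eq_one_iff_odd, hF, sum_add_distrib, sum_const, sum_ite_eq, nsmul_eq_mul,
    ZMod.natCast_eq_zero_iff_even.mpr hS, zero_mul, zero_add]
  split_ifs with hx <;> simp [hx]

end SimpleGraph

/-- A finite connected graph with an even number of vertices has a spanning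
subgraph (given by an edge set `T`) in which every vertex has odd degree. -/
theorem stmt_2 {V : Type} [Fintype V] [DecidableEq V]
    (G : SimpleGraph V) [DecidableRel G.Adj] (hconn : G.Connected)
    (heven : Even (Fintype.card V)) :
    ∃ T ⊆ G.edgeFinset, ∀ v : V, Odd ((T.filter (fun e => v ∈ e)).card) := by
  obtain ⟨T, hTG, hT⟩ := hconn.exists_edges_odd_degree_iff_mem (S := univ) heven
  exact ⟨T, by rwa [← coe_subset, SimpleGraph.coe_edgeFinset], fun v => (hT v).mpr (mem_univ v)⟩
end

section
/- A minimum-weight perfect matching in the shortest-path metric of a graph corresponds to a collection of pairwise edge-disjoint shortest paths: if two of the paths shared an edge, one could exchange endpoints to obtain a strictly lighter perfect matching. -/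
/-!
Take any shortest walks `P x` from `x` to `m x`. If `P x` and `P y` (for different pairs) share
an edge `ab` of weight `w > 0`, then, after possibly swapping `y` and `m y`,
`d x a + w + d b (m x) ≤ d x (m x)` and `d y a + w + d b (m y) ≤ d y (m y)`. By the triangle
inequality through `a` and `b`, re-pairing `{x, y}, {m x, m y}` is then strictly cheaper than
`{x, m x}, {y, m y}`, contradicting minimality of `m`.
-/

open Function Finset

namespace SimpleGraph.Walk

variable {V : Type*} {G : SimpleGraph V} {M : Type*} [AddCommMonoid M]

def weight (wt : Sym2 V → M) {u v : V} (p : G.Walk u v) : M := (p.edges.map wt).sum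

variable (wt : Sym2 V → M)

@[simp] lemma weight_nil {u : V} : (nil : G.Walk u u).weight wt = 0 := rfl

@[simp] lemma weight_cons {u v w : V} (h : G.Adj u v) (p : G.Walk v w) :
    (cons h p).weight wt = wt s(u, v) + p.weight wt := by
  simp [weight]

@[simp] lemma weight_append {u v w : V} (p : G.Walk u v) (q : G.Walk v w) :
    (p.append q).weight wt = p.weight wt + q.weight wt := by
  simp [weight]

@[simp] lemma weight_reverse {u v : V} (p : G.Walk u v) :
    p.reverse.weight wt = p.weight wt := by
  simp [weight, List.sum_reverse]

end SimpleGraph.Walk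

def IsWalkDist {V : Type*} (G : SimpleGraph V) (wt : Sym2 V → ℝ) (d : V → V → ℝ) : Prop :=
  ∀ u v, IsLeast {x | ∃ p : G.Walk u v, x = p.weight wt} (d u v)

namespace IsWalkDist

variable {V : Type*} {G : SimpleGraph V} {wt : Sym2 V → ℝ} {d : V → V → ℝ}
  (hd : IsWalkDist G wt d)
include hd

lemma exists_weight_eq (u v : V) : ∃ p : G.Walk u v, p.weight wt = d u v :=
  let ⟨p, hp⟩ := (hd u v).1
  ⟨p, hp.symm⟩

lemma le_weight {u v : V} (p : G.Walk u v) : d u v ≤ p.weight wt := (hd u v).2 ⟨p, rfl⟩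

lemma symm (u v : V) : d u v = d v u := by
  obtain ⟨p, hp⟩ := hd.exists_weight_eq u v
  obtain ⟨q, hq⟩ := hd.exists_weight_eq v u
  have h₁ := hd.le_weight q.reverse
  have h₂ := hd.le_weight p.reverse
  rw [SimpleGraph.Walk.weight_reverse] at h₁ h₂
  linarith

lemma self_nonpos (u : V) : d u u ≤ 0 := hd.le_weight .nil

lemma triangle (u v w : V) : d u w ≤ d u v + d v w := by
  obtain ⟨p, hp⟩ := hd.exists_weight_eq u v
  obtain ⟨q, hq⟩ := hd.exists_weight_eq v w
  simpa [hp, hq] using hd.le_weight (p.append q)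

lemma le_wt_of_adj {u v : V} (h : G.Adj u v) : d u v ≤ wt s(u, v) := by
  simpa using hd.le_weight (.cons h .nil)

lemma exists_add_wt_add_le_weight {u v : V} {e : Sym2 V} (p : G.Walk u v) (he : e ∈ p.edges) :
    ∃ a b, e = s(a, b) ∧ d u a + wt e + d b v ≤ p.weight wt := by
  induction p with
  | nil => simp at he
  | @cons u w v h q ih =>
    rw [SimpleGraph.Walk.edges_cons, List.mem_cons] at he
    rw [SimpleGraph.Walk.weight_cons]
    rcases he with rfl | he
    · exact ⟨u, w, rfl, by linarith [hd.self_nonpos u, hd.le_weight q]⟩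
    · obtain ⟨a, b, rfl, hab⟩ := ih he
      refine ⟨a, b, rfl, ?_⟩
      linarith [hd.triangle u w a, hd.le_wt_of_adj h]

lemma add_lt_add_of_shared_edge {x x' y y' a b : V} {w : ℝ} (hw : 0 < w)
    (hx : d x a + w + d b x' ≤ d x x') (hy : d y a + w + d b y' ≤ d y y') :
    d x y + d x' y' < d x x' + d y y' := by
  linarith [hd.triangle x a y, hd.triangle x' b y', hd.symm a y, hd.symm x' b]

end IsWalkDist

section Involution

variable {V : Type*} [DecidableEq V] {m : V → V}

/-- With `a = z` and `b = m y`, this turns the pairs `{y, m y}, {z, m z}` of `m` into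
`{y, z}, {m y, m z}` and keeps all other pairs. -/
def conjSwap (m : V → V) (a b : V) : V → V := Equiv.swap a b ∘ m ∘ Equiv.swap a b

lemma Function.Involutive.conjSwap (hinv : Involutive m) (a b : V) :
    Involutive (conjSwap m a b) := by
  intro x
  simp only [_root_.conjSwap, comp_apply, Equiv.swap_apply_self, hinv (Equiv.swap a b x)]

lemma conjSwap_ne_self (hne : ∀ x, m x ≠ x) (a b x : V) : conjSwap m a b x ≠ x :=
  fun h => hne _ (Equiv.swap_apply_eq_iff.mp h)

lemma sum_conjSwap_add [Fintype V] {M : Type*} [AddCommGroup M] (c : V → V → M)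
    (hinv : Involutive m) (hne : ∀ x, m x ≠ x) {y z : V} (hzy : z ≠ y) (hzmy : z ≠ m y) :
    ∑ x, c x (conjSwap m z (m y) x) + (c y (m y) + c z (m z) + c (m y) y + c (m z) z)
      = ∑ x, c x (m x) + (c y z + c z y + c (m y) (m z) + c (m z) (m y)) := by
  set m' := conjSwap m z (m y)
  have hymy : y ≠ m y := (hne y).symm
  have hzmz : z ≠ m z := (hne z).symm
  have hymz : y ≠ m z := fun h => hzmy (by rw [h, hinv])
  have hmymz : m y ≠ m z := fun h => hzy (hinv.injective h).symm
  have hm'y : m' y = z := by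
    simp [m', conjSwap, Equiv.swap_apply_of_ne_of_ne hzy.symm hymy]
  have hm'z : m' z = y := by
    simp [m', conjSwap, hinv y, Equiv.swap_apply_of_ne_of_ne hzy.symm hymy]
  have hm'my : m' (m y) = m z := by
    simp [m', conjSwap, Equiv.swap_apply_of_ne_of_ne hzmz.symm hmymz.symm]
  have hm'mz : m' (m z) = m y := by
    simp [m', conjSwap, Equiv.swap_apply_of_ne_of_ne hzmz.symm hmymz.symm, hinv z]
  set s : Finset V := {y, z, m y, m z}
  have hsum : ∀ f : V → M, ∑ x ∈ s, f x = f y + f z + f (m y) + f (m z) := by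
    intro f
    rw [sum_insert (by simp [hzy.symm, hymy, hymz]), sum_insert (by simp [hzmy, hzmz]),
      sum_pair hmymz, add_assoc, add_assoc]
  have hout : ∀ x ∉ s, c x (m' x) - c x (m x) = 0 := by
    intro x hx
    simp only [s, mem_insert, mem_singleton, not_or] at hx
    obtain ⟨hxy, hxz, hxmy, hxmz⟩ := hx
    have hmx : m x ≠ z := fun h => hxmz (by rw [← h, hinv])
    have hmxmy : m x ≠ m y := fun h => hxy (hinv.injective h)
    simp only [m', conjSwap, comp_apply, Equiv.swap_apply_of_ne_of_ne hxz hxmy,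
      Equiv.swap_apply_of_ne_of_ne hmx hmxmy, sub_self]
  have key := sum_subset (subset_univ s) (fun x _ hx => hout x hx)
  rw [sum_sub_distrib, sum_sub_distrib, hsum, hsum, hm'y, hm'z, hm'my, hm'mz, hinv, hinv] at key
  rw [sub_eq_iff_eq_add.mp key.symm]
  abel

lemma add_le_add_of_forall_sum_le [Fintype V] {c : V → V → ℝ}
    (hc : ∀ u v, c u v = c v u) (hinv : Involutive m) (hne : ∀ x, m x ≠ x)
    (hmin : ∀ m' : V → V, Involutive m' → (∀ x, m' x ≠ x) →
      ∑ x, c x (m x) ≤ ∑ x, c x (m' x))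
    {y z : V} (hzy : z ≠ y) (hzmy : z ≠ m y) :
    c y (m y) + c z (m z) ≤ c y z + c (m y) (m z) := by
  have h := hmin _ (hinv.conjSwap z (m y)) (conjSwap_ne_self hne z (m y))
  have := sum_conjSwap_add c hinv hne hzy hzmy
  rw [hc (m y) y, hc (m z) z, hc z y, hc (m z) (m y)] at this
  linarith

end Involution

theorem stmt_8_general {V : Type} [Fintype V]
    (G : SimpleGraph V)
    (wt : Sym2 V → ℝ) (hpos : ∀ e ∈ G.edgeSet, 0 < wt e)
    (d : V → V → ℝ)
    (hd : ∀ u v : V,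
      IsLeast {x : ℝ | ∃ p : G.Walk u v, x = (p.edges.map wt).sum} (d u v))
    (m : V → V) (hinv : ∀ x, m (m x) = x) (hne : ∀ x, m x ≠ x)
    (hmin : ∀ m' : V → V, (∀ x, m' (m' x) = x) → (∀ x, m' x ≠ x) →
      (∑ x : V, d x (m x)) ≤ ∑ x : V, d x (m' x)) :
    ∃ P : (x : V) → G.Walk x (m x),
      (∀ x : V, ((P x).edges.map wt).sum = d x (m x)) ∧
      (∀ x y : V, y ≠ x → y ≠ m x →
        ∀ e : Sym2 V, e ∈ (P x).edges → e ∉ (P y).edges) := by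
  classical
  have hdist : IsWalkDist G wt d := hd
  choose P hP using fun x => hdist.exists_weight_eq x (m x)
  refine ⟨P, hP, fun x y hyx hymx e hex hey => ?_⟩
  have hw : 0 < wt e := hpos e ((P x).edges_subset_edgeSet hex)
  obtain ⟨a, b, rfl, hx⟩ := hdist.exists_add_wt_add_le_weight (P x) hex
  obtain ⟨a', b', hab, hy⟩ := hdist.exists_add_wt_add_le_weight (P y) hey
  rw [hP] at hx hy
  rcases Sym2.eq_iff.mp hab with ⟨rfl, rfl⟩ | ⟨rfl, rfl⟩
  · exact (hdist.add_lt_add_of_shared_edge hw hx hy).not_ge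
      (add_le_add_of_forall_sum_le hdist.symm hinv hne hmin hyx hymx)
  · -- `P y` crosses the edge backwards, so re-pair `x` with `m y` instead of `y`
    have hy' : d (m y) a + wt s(a, b) + d b y ≤ d (m y) y := by
      rw [hdist.symm (m y) a, hdist.symm b y, hdist.symm (m y) y]
      linarith
    have hmyx : m y ≠ x := fun h => hymx (by rw [← h, hinv])
    have hmymx : m y ≠ m x := fun h => hyx (Involutive.injective hinv h)
    have h := add_le_add_of_forall_sum_le hdist.symm hinv hne hmin hmyx hmymx
    rw [hinv] at h
    exact (hdist.add_lt_add_of_shared_edge hw hx hy').not_ge h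

/-- A minimum-weight perfect matching in the shortest-path metric of a
positively weighted connected graph can be realized by pairwise edge-disjoint
shortest paths. -/
theorem stmt_8 {V : Type} [Fintype V] [DecidableEq V]
    (G : SimpleGraph V) (hconn : G.Connected)
    (wt : Sym2 V → ℝ) (hpos : ∀ e ∈ G.edgeSet, 0 < wt e)
    (d : V → V → ℝ)
    (hd : ∀ u v : V,
      IsLeast {x : ℝ | ∃ p : G.Walk u v, x = (p.edges.map wt).sum} (d u v))
    (m : V → V) (hinv : ∀ x, m (m x) = x) (hne : ∀ x, m x ≠ x)
    (hmin : ∀ m' : V → V, (∀ x, m' (m' x) = x) → (∀ x, m' x ≠ x) →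
      (∑ x : V, d x (m x)) ≤ ∑ x : V, d x (m' x)) :
    ∃ P : (x : V) → G.Walk x (m x),
      (∀ x : V, ((P x).edges.map wt).sum = d x (m x)) ∧
      (∀ x y : V, y ≠ x → y ≠ m x →
        ∀ e : Sym2 V, e ∈ (P x).edges → e ∉ (P y).edges) :=
  stmt_8_general G wt hpos d hd m hinv hne hmin
end
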